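/- If G is a graph whose vertices lie on a circle (convex drawing) and the outer cycle admits a triangulation T (of the convex polygon on the vertices) such that every diagonal of T is intertwined with at most c edges of G, then G has a balanced separation of order at most c + 2, i.e., a separation (A,B) with |A ∩ B| ≤ c + 2 and |A \ B|, |B \ A| ≤ 2|V(G)|/3. -/

import Mathlib

open Classical Real

/-- `x` lies strictly between `a` and `b` in the linear order on `ℝ`
(interpreted as positions along a cut-open circle). -/
def ArcBtw (x a b : ℝ) : Prop := min a b < x ∧ x < max a b

/-- The pairs `{a,b}` and `{c,d}` of positions on the circle are intertwined:
exactly one of `c`, `d` lies on the arc strictly between `a` and `b`. -/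
def Intertwined (a b c d : ℝ) : Prop := Xor' (ArcBtw c a b) (ArcBtw d a b)

/-- The vertex pairs `{a,b}` and `{c,d}` span four distinct vertices and are
intertwined in the cyclic order given by `pos`; equivalently, the corresponding
chords cross in the convex drawing. -/
def CrossPairs {V : Type*} (pos : V → ℝ) (a b c d : V) : Prop :=
  a ≠ c ∧ a ≠ d ∧ b ≠ c ∧ b ≠ d ∧ Intertwined (pos a) (pos b) (pos c) (pos d)

/-- The unordered pair `e` pierces (crosses) the chord `{a,b}`. -/
def Pierces {V : Type*} (pos : V → ℝ) (e : Sym2 V) (a b : V) : Prop :=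
  ∃ c d, e = s(c, d) ∧ CrossPairs pos a b c d

/-- Number of edges of `G` that cross the chord `{a,b}` in the convex drawing `pos`. -/
noncomputable def crossNum {V : Type*} (G : SimpleGraph V) (pos : V → ℝ) (a b : V) : ℕ :=
  {e ∈ G.edgeSet | Pierces pos e a b}.ncard

/-- `pos` is an outer `k`-planar drawing of `G`: a convex drawing (injective
placement on the circle) where every edge is crossed by at most `k` other edges. -/
def IsOuterkPlanarDrawing {V : Type*} (G : SimpleGraph V) (k : ℕ) (pos : V → ℝ) : Prop :=
  Function.Injective pos ∧ ∀ a b, G.Adj a b → crossNum G pos a b ≤ k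

/-- `G` is outer `k`-planar. -/
def IsOuterkPlanar {V : Type*} (G : SimpleGraph V) (k : ℕ) : Prop :=
  ∃ pos : V → ℝ, IsOuterkPlanarDrawing G k pos

/-- `a` and `b` are consecutive in the cyclic order given by `pos`:
one of the two open arcs between them contains no vertex. -/
def ConsecutiveAt {V : Type*} (pos : V → ℝ) (a b : V) : Prop :=
  a ≠ b ∧ ((∀ x, x ≠ a → x ≠ b → ArcBtw (pos x) (pos a) (pos b)) ∨
           (∀ x, x ≠ a → x ≠ b → ¬ ArcBtw (pos x) (pos a) (pos b)))

/-- The unordered pairs `e` and `f` cross in the convex drawing `pos`. -/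
def SymCross {V : Type*} (pos : V → ℝ) (e f : Sym2 V) : Prop :=
  ∃ a b c d, e = s(a, b) ∧ f = s(c, d) ∧ CrossPairs pos a b c d

/-- A triangulation of the convex polygon whose vertices are placed by `pos`:
a maximal set of pairwise non-crossing inner diagonals. Together with the
polygon sides (pairs of consecutive vertices) these are the links of the
triangulation. -/
structure PolyTriangulation {V : Type*} (pos : V → ℝ) where
  diags : Set (Sym2 V)
  diag_proper : ∀ e ∈ diags, ∀ a b : V, e = s(a, b) → a ≠ b ∧ ¬ ConsecutiveAt pos a b
  noncross : ∀ e ∈ diags, ∀ f ∈ diags, ¬ SymCross pos e f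
  maximal : ∀ a b : V, a ≠ b → ¬ ConsecutiveAt pos a b → s(a, b) ∉ diags →
      ∃ e ∈ diags, SymCross pos e s(a, b)

/-- `{a,b}` is a link of the triangulation `T`: a polygon side or a diagonal. -/
def PolyTriangulation.IsLink {V : Type*} {pos : V → ℝ} (T : PolyTriangulation pos)
    (a b : V) : Prop :=
  ConsecutiveAt pos a b ∨ s(a, b) ∈ T.diags

/-- `u`, `v`, `w` form a triangle (face) of the triangulation `T`. -/
def PolyTriangulation.IsTriangle {V : Type*} {pos : V → ℝ} (T : PolyTriangulation pos)
    (u v w : V) : Prop :=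
  u ≠ v ∧ v ≠ w ∧ u ≠ w ∧ T.IsLink u v ∧ T.IsLink v w ∧ T.IsLink u w


/-!
A link `{a, b}` of `T` is pierced by at most `c` edges of `G` (a polygon side by none), so `a`,
`b` and one endpoint of each piercing edge separate the two open arcs cut off by `{a, b}`. It
remains to find a link both of whose arcs carry at most `2n/3` vertices. Cut the circle open and,
among the links `a < b` with small outer arc, take one with fewest vertices inside. If the inside
were still too large, one of the other two sides `{a, x}`, `{x, b}` of the triangle of `T` on
`{a, b}` would enclose at least half of the remaining inside vertices: a link with small outer
arc and smaller inside.
-/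

lemma arcBtw_comm {x a b : ℝ} : ArcBtw x a b ↔ ArcBtw x b a := by
  simp only [ArcBtw, min_comm, max_comm]

lemma arcBtw_iff_of_lt {x a b : ℝ} (h : a < b) : ArcBtw x a b ↔ a < x ∧ x < b := by
  simp only [ArcBtw, min_eq_left h.le, max_eq_right h.le]

lemma Intertwined.symm {a b c d : ℝ}
    (hac : a ≠ c) (had : a ≠ d) (hbc : b ≠ c) (hbd : b ≠ d) (h : Intertwined a b c d) :
    Intertwined c d a b := by
  unfold Intertwined ArcBtw Xor' at *
  rcases le_total a b with h₁ | h₁ <;> rcases le_total c d with h₂ | h₂ <;>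
    simp only [min_eq_left, max_eq_right, min_eq_right, max_eq_left, h₁, h₂] at h ⊢ <;>
    grind

section Arcs

variable {V : Type*} (pos : V → ℝ)

/-- The open arc between `a` and `b` that does not contain the point where the circle is cut. -/
def innerArc (a b : V) : Set V := {y | ArcBtw (pos y) (pos a) (pos b)}

/-- The open arc between `a` and `b` that contains the point where the circle is cut. -/
def outerArc (a b : V) : Set V := {y | y ≠ a ∧ y ≠ b ∧ ¬ ArcBtw (pos y) (pos a) (pos b)}

variable {pos} {a b c d x y : V}

lemma mem_innerArc_iff_of_lt (h : pos a < pos b) :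
    y ∈ innerArc pos a b ↔ pos a < pos y ∧ pos y < pos b :=
  arcBtw_iff_of_lt h

lemma ne_of_mem_innerArc (h : y ∈ innerArc pos a b) : y ≠ a ∧ y ≠ b := by
  constructor <;> rintro rfl <;>
    simp only [innerArc, ArcBtw, Set.mem_ofPred_eq, inf_lt_iff, lt_sup_iff, lt_self_iff_false,
      false_or, or_false] at h <;>
    linarith [h.1, h.2]

lemma notMem_outerArc_of_mem_innerArc (h : y ∈ innerArc pos a b) : y ∉ outerArc pos a b :=
  fun h' => h'.2.2 h

lemma innerArc_comm : innerArc pos a b = innerArc pos b a :=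
  Set.ext fun _ => arcBtw_comm

lemma outerArc_comm : outerArc pos a b = outerArc pos b a := by
  ext y
  simp only [outerArc, Set.mem_ofPred_eq, arcBtw_comm (a := pos a)]
  tauto

lemma crossPairs_iff :
    CrossPairs pos a b c d ↔
      c ∈ innerArc pos a b ∧ d ∈ outerArc pos a b ∨
        d ∈ innerArc pos a b ∧ c ∈ outerArc pos a b := by
  constructor
  · rintro ⟨hac, had, hbc, hbd, ⟨hc, hd⟩ | ⟨hd, hc⟩⟩
    · exact Or.inl ⟨hc, had.symm, hbd.symm, hd⟩
    · exact Or.inr ⟨hd, hac.symm, hbc.symm, hc⟩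
  · rintro (⟨hc, hd⟩ | ⟨hd, hc⟩)
    · obtain ⟨hca, hcb⟩ := ne_of_mem_innerArc hc
      exact ⟨hca.symm, hd.1.symm, hcb.symm, hd.2.1.symm, Or.inl ⟨hc, hd.2.2⟩⟩
    · obtain ⟨hda, hdb⟩ := ne_of_mem_innerArc hd
      exact ⟨hc.1.symm, hda.symm, hc.2.1.symm, hdb.symm, Or.inr ⟨hd, hc.2.2⟩⟩

lemma crossPairs_comm_left : CrossPairs pos a b c d ↔ CrossPairs pos b a c d := by
  rw [crossPairs_iff, crossPairs_iff, innerArc_comm, outerArc_comm]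

lemma crossPairs_comm_right : CrossPairs pos a b c d ↔ CrossPairs pos a b d c := by
  rw [crossPairs_iff, crossPairs_iff, or_comm]

lemma CrossPairs.symm (hinj : Function.Injective pos) (h : CrossPairs pos a b c d) :
    CrossPairs pos c d a b := by
  obtain ⟨hac, had, hbc, hbd, hI⟩ := h
  exact ⟨hac.symm, hbc.symm, had.symm, hbd.symm,
    hI.symm (hinj.ne hac) (hinj.ne had) (hinj.ne hbc) (hinj.ne hbd)⟩

lemma pierces_mk_iff : Pierces pos s(c, d) a b ↔ CrossPairs pos a b c d := by
  refine ⟨fun ⟨c', d', he, h⟩ => ?_, fun h => ⟨c, d, rfl, h⟩⟩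
  rcases Sym2.eq_iff.mp he with ⟨rfl, rfl⟩ | ⟨rfl, rfl⟩
  exacts [h, crossPairs_comm_right.mp h]

lemma SymCross.pierces (hinj : Function.Injective pos) {e : Sym2 V}
    (h : SymCross pos e s(a, b)) : Pierces pos e a b := by
  obtain ⟨c, d, a', b', rfl, he, h⟩ := h
  rw [pierces_mk_iff]
  rcases Sym2.eq_iff.mp he with ⟨rfl, rfl⟩ | ⟨rfl, rfl⟩
  exacts [h.symm hinj, crossPairs_comm_left.mpr (h.symm hinj)]

lemma ConsecutiveAt.not_crossPairs (h : ConsecutiveAt pos a b) : ¬ CrossPairs pos a b c d := by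
  intro hcd
  obtain ⟨-, hout | hin⟩ := h <;> rcases crossPairs_iff.mp hcd with ⟨hc, hd⟩ | ⟨hd, hc⟩
  · exact hd.2.2 (hout d hd.1 hd.2.1)
  · exact hc.2.2 (hout c hc.1 hc.2.1)
  · exact hin c (ne_of_mem_innerArc hc).1 (ne_of_mem_innerArc hc).2 hc
  · exact hin d (ne_of_mem_innerArc hd).1 (ne_of_mem_innerArc hd).2 hd

lemma crossNum_eq_zero_of_consecutiveAt (G : SimpleGraph V) (h : ConsecutiveAt pos a b) :
    crossNum G pos a b = 0 := by
  have hempty : {e ∈ G.edgeSet | Pierces pos e a b} = ∅ :=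
    Set.eq_empty_of_forall_notMem fun _ ⟨_, _, _, _, hcd⟩ => h.not_crossPairs hcd
  rw [crossNum, hempty, Set.ncard_empty]

lemma ncard_innerArc_add_ncard_outerArc [Fintype V] (hab : a ≠ b) :
    (innerArc pos a b).ncard + (outerArc pos a b).ncard + 2 = Fintype.card V := by
  have hunion : innerArc pos a b ∪ outerArc pos a b = ({a, b} : Set V)ᶜ := by
    ext y
    simp only [innerArc, outerArc, Set.mem_union, Set.mem_ofPred_eq, Set.mem_compl_iff,
      Set.mem_insert_iff, Set.mem_singleton_iff]
    by_cases hy : ArcBtw (pos y) (pos a) (pos b)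
    · have := ne_of_mem_innerArc (pos := pos) hy
      tauto
    · tauto
  have hdisj : Disjoint (innerArc pos a b) (outerArc pos a b) :=
    Set.disjoint_left.mpr fun _ => notMem_outerArc_of_mem_innerArc
  have hcompl := Set.ncard_add_ncard_compl ({a, b} : Set V)
  rw [Set.ncard_pair hab, Nat.card_eq_fintype_card, ← hunion, Set.ncard_union_eq hdisj] at hcompl
  omega

lemma ncard_innerArc_split [Fintype V] (hinj : Function.Injective pos)
    (hax : pos a < pos x) (hxb : pos x < pos b) :
    (innerArc pos a x).ncard + (innerArc pos x b).ncard + 1 = (innerArc pos a b).ncard := by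
  have hsplit : innerArc pos a b = innerArc pos a x ∪ insert x (innerArc pos x b) := by
    ext y
    simp only [Set.mem_union, Set.mem_insert_iff, mem_innerArc_iff_of_lt hax,
      mem_innerArc_iff_of_lt hxb, mem_innerArc_iff_of_lt (hax.trans hxb)]
    by_cases hyx : y = x
    · grind
    · have := hinj.ne hyx
      grind
  have hdisj : Disjoint (innerArc pos a x) (insert x (innerArc pos x b)) := by
    rw [Set.disjoint_insert_right, Set.disjoint_left]
    simp only [mem_innerArc_iff_of_lt hax, mem_innerArc_iff_of_lt hxb]
    grind
  rw [hsplit, Set.ncard_union_eq hdisj,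
    Set.ncard_insert_of_notMem (fun h => (ne_of_mem_innerArc h).1 rfl)]
  omega

lemma exists_consecutiveAt_mem_innerArc [Finite V] (hab : pos a < pos b)
    (hne : (innerArc pos a b).Nonempty) : ∃ y ∈ innerArc pos a b, ConsecutiveAt pos a y := by
  obtain ⟨y, hy, hmin⟩ := Set.exists_min_image _ pos (Set.toFinite _) hne
  have hay := (mem_innerArc_iff_of_lt hab).mp hy
  refine ⟨y, hy, ne_of_apply_ne pos hay.1.ne, Or.inr fun z _ _ hz => ?_⟩
  rw [arcBtw_iff_of_lt hay.1] at hz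
  have := hmin z ((mem_innerArc_iff_of_lt hab).mpr ⟨hz.1, hz.2.trans hay.2⟩)
  linarith [hz.2]

/-- The first and the last vertex of the cut-open circle are neighbours on the circle. -/
lemma exists_consecutiveAt_outerArc_eq_empty [Fintype V] (hinj : Function.Injective pos)
    (hn : 2 ≤ Fintype.card V) :
    ∃ a b, pos a < pos b ∧ ConsecutiveAt pos a b ∧ outerArc pos a b = ∅ := by
  have : Nontrivial V := Fintype.one_lt_card_iff_nontrivial.mp hn
  obtain ⟨a, ha⟩ := Finite.exists_min pos
  obtain ⟨b, hb⟩ := Finite.exists_max pos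
  obtain ⟨y, z, hyz⟩ := exists_pair_ne V
  have hab : pos a < pos b := by
    rcases (hinj.ne hyz).lt_or_gt with h | h
    · linarith [ha y, hb z]
    · linarith [ha z, hb y]
  have hall : ∀ y, y ≠ a → y ≠ b → ArcBtw (pos y) (pos a) (pos b) := fun y hya hyb =>
    (arcBtw_iff_of_lt hab).mpr
      ⟨(ha y).lt_of_ne (hinj.ne hya).symm, (hb y).lt_of_ne (hinj.ne hyb)⟩
  exact ⟨a, b, hab, ⟨ne_of_apply_ne pos hab.ne, Or.inl hall⟩,
    Set.eq_empty_of_forall_notMem fun y ⟨hya, hyb, hy⟩ => hy (hall y hya hyb)⟩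

/-- The separator consists of `a`, `b` and the inner endpoints of the edges piercing `{a, b}`. -/
lemma exists_separation_of_crossNum_le [Fintype V] (G : SimpleGraph V) {k : ℕ} (hab : a ≠ b)
    (hk : crossNum G pos a b ≤ k) :
    ∃ A B : Set V, A ∪ B = Set.univ ∧ (∀ u ∈ A \ B, ∀ v ∈ B \ A, ¬ G.Adj u v) ∧
      A \ B ⊆ innerArc pos a b ∧ B \ A ⊆ outerArc pos a b ∧ (A ∩ B).ncard ≤ k + 2 := by
  set X : Set (Sym2 V) := {e ∈ G.edgeSet | Pierces pos e a b}
  have hX : ∀ e ∈ X, ∃ v ∈ innerArc pos a b, v ∈ e := by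
    rintro e ⟨-, c, d, rfl, hcd⟩
    rcases crossPairs_iff.mp hcd with ⟨hc, -⟩ | ⟨hd, -⟩
    exacts [⟨c, hc, Sym2.mem_mk_left c d⟩, ⟨d, hd, Sym2.mem_mk_right c d⟩]
  have : Nonempty V := ⟨a⟩
  choose! inner hinner hmem using hX
  set S : Set V := {a, b} ∪ inner '' X
  refine ⟨innerArc pos a b ∪ S, outerArc pos a b ∪ S, ?_, ?_, ?_, ?_, ?_⟩
  · refine Set.eq_univ_of_forall fun y => ?_
    by_cases hy : ArcBtw (pos y) (pos a) (pos b)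
    · exact Or.inl (Or.inl hy)
    · by_cases hya : y = a
      · exact Or.inl (Or.inr (Or.inl (Or.inl hya)))
      by_cases hyb : y = b
      · exact Or.inl (Or.inr (Or.inl (Or.inr hyb)))
      exact Or.inr (Or.inl ⟨hya, hyb, hy⟩)
  · rintro u ⟨hu, huS⟩ v ⟨hv, hvS⟩ huv
    simp only [Set.mem_union, not_or] at huS hvS
    replace hu := hu.resolve_right huS.2
    replace hv := hv.resolve_right hvS.2
    have he : s(u, v) ∈ X :=
      ⟨huv, pierces_mk_iff.mpr (crossPairs_iff.mpr (Or.inl ⟨hu, hv⟩))⟩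
    rcases Sym2.mem_iff.mp (hmem _ he) with h | h
    · exact huS.2 (Or.inr ⟨_, he, h⟩)
    · exact notMem_outerArc_of_mem_innerArc (h ▸ hinner _ he) hv
  · exact fun y ⟨hyA, hyB⟩ => hyA.resolve_right fun h => hyB (Or.inr h)
  · exact fun y ⟨hyB, hyA⟩ => hyB.resolve_right fun h => hyA (Or.inr h)
  · have hsub : (innerArc pos a b ∪ S) ∩ (outerArc pos a b ∪ S) ⊆ S := by
      rintro y ⟨hy | hy, hy' | hy'⟩
      exacts [absurd hy' (notMem_outerArc_of_mem_innerArc hy), hy', hy, hy]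
    calc ((innerArc pos a b ∪ S) ∩ (outerArc pos a b ∪ S)).ncard
        ≤ S.ncard := Set.ncard_le_ncard hsub
      _ ≤ ({a, b} : Set V).ncard + (inner '' X).ncard := Set.ncard_union_le _ _
      _ ≤ 2 + k := add_le_add (Set.ncard_pair hab).le ((Set.ncard_image_le X.toFinite).trans hk)
      _ = k + 2 := add_comm 2 k

end Arcs

namespace PolyTriangulation

variable {V : Type*} {pos : V → ℝ} (T : PolyTriangulation pos) {a b c d p q x : V}

lemma not_crossPairs_of_isLink (hL : T.IsLink a b) (hf : s(c, d) ∈ T.diags) :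
    ¬ CrossPairs pos a b c d := by
  rcases hL with hcons | hdiag
  · exact hcons.not_crossPairs
  · exact fun h => T.noncross _ hdiag _ hf ⟨a, b, c, d, rfl, rfl, h⟩

/-- Anywhere but at `a`, the diagonal `{p, q}` would cross the link `{a, x}` or `{a, b}`. -/
lemma eq_of_crossPairs_of_isLink (hinj : Function.Injective pos) (hL : T.IsLink a b)
    (hLx : T.IsLink a x) (hax : pos a < pos x) (hxb : pos x < pos b) (hf : s(p, q) ∈ T.diags)
    (hp : p ∈ innerArc pos x b) (hq : q ∈ outerArc pos x b) : q = a := by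
  rw [mem_innerArc_iff_of_lt hxb] at hp
  obtain ⟨hqx, hqb, hq⟩ := hq
  rw [arcBtw_iff_of_lt hxb] at hq
  by_contra hqa
  by_cases hqax : pos a < pos q ∧ pos q < pos x
  · refine T.not_crossPairs_of_isLink hLx (by rwa [Sym2.eq_swap]) (crossPairs_iff.mpr
      (Or.inl ⟨(mem_innerArc_iff_of_lt hax).mpr hqax, ?_, ?_, ?_⟩))
    · exact ne_of_apply_ne pos (by linarith [hp.1])
    · exact ne_of_apply_ne pos (by linarith [hp.1])
    · rw [arcBtw_iff_of_lt hax]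
      intro h
      linarith [h.2, hp.1]
  · refine T.not_crossPairs_of_isLink hL hf (crossPairs_iff.mpr
      (Or.inl ⟨(mem_innerArc_iff_of_lt (hax.trans hxb)).mpr ⟨by linarith [hp.1], hp.2⟩,
        hqa, hqb, ?_⟩))
    rw [arcBtw_iff_of_lt (hax.trans hxb)]
    have := hinj.ne hqx
    grind

/-- The apex is the farthest vertex of the inner arc that is linked to `a`. -/
lemma exists_isTriangle [Finite V] (hinj : Function.Injective pos) (hab : pos a < pos b)
    (hL : T.IsLink a b) (hne : (innerArc pos a b).Nonempty) :
    ∃ x ∈ innerArc pos a b, T.IsTriangle a x b := by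
  obtain ⟨y, hy, hay⟩ := exists_consecutiveAt_mem_innerArc hab hne
  obtain ⟨x, ⟨hx, hLx⟩, hmax⟩ := Set.exists_max_image
    {y ∈ innerArc pos a b | T.IsLink a y} pos (Set.toFinite _) ⟨y, hy, Or.inl hay⟩
  obtain ⟨hxa, hxb⟩ := ne_of_mem_innerArc hx
  have hax := (mem_innerArc_iff_of_lt hab).mp hx
  refine ⟨x, hx, hxa.symm, hxb, ne_of_apply_ne pos hab.ne, hLx, ?_, hL⟩
  by_contra hxbL
  obtain ⟨f, hf, hcross⟩ :=
    T.maximal x b hxb (fun h => hxbL (Or.inl h)) (fun h => hxbL (Or.inr h))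
  obtain ⟨p, q, rfl, hpq⟩ := hcross.pierces hinj
  clear hcross
  wlog hpq' : p ∈ innerArc pos x b ∧ q ∈ outerArc pos x b generalizing p q
  · exact this q p (crossPairs_comm_right.mp hpq) (by rwa [Sym2.eq_swap])
      ((crossPairs_iff.mp hpq).resolve_left hpq')
  obtain rfl := T.eq_of_crossPairs_of_isLink hinj hL hLx hax.1 hax.2 hf hpq'.1 hpq'.2
  have hp := (mem_innerArc_iff_of_lt hax.2).mp hpq'.1
  have := hmax p ⟨(mem_innerArc_iff_of_lt hab).mpr ⟨hax.1.trans hp.1, hp.2⟩,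
    Or.inr (by rwa [Sym2.eq_swap])⟩
  linarith [hp.1]

lemma exists_balanced_link [Fintype V] (hinj : Function.Injective pos)
    (hn : 2 ≤ Fintype.card V) :
    ∃ a b, a ≠ b ∧ T.IsLink a b ∧ 3 * (innerArc pos a b).ncard ≤ 2 * Fintype.card V ∧
      3 * (outerArc pos a b).ncard ≤ 2 * Fintype.card V := by
  let M : Set (V × V) := {p | pos p.1 < pos p.2 ∧ T.IsLink p.1 p.2 ∧
    3 * (outerArc pos p.1 p.2).ncard ≤ 2 * Fintype.card V}
  obtain ⟨a₀, b₀, h₀, hcons₀, hout₀⟩ := exists_consecutiveAt_outerArc_eq_empty hinj hn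
  obtain ⟨⟨a, b⟩, ⟨hab, hL, hout⟩, hmin⟩ :=
    Set.exists_min_image M (fun p => (innerArc pos p.1 p.2).ncard) (Set.toFinite _)
      ⟨(a₀, b₀), h₀, Or.inl hcons₀, by simp [hout₀]⟩
  dsimp only at hab hL hout hmin
  refine ⟨a, b, ne_of_apply_ne pos hab.ne, hL, ?_, hout⟩
  by_contra! hin
  obtain ⟨x, hx, -, -, -, hax, hxb, -⟩ :=
    T.exists_isTriangle hinj hab hL (Set.nonempty_of_ncard_ne_zero (by omega))
  have hx' := (mem_innerArc_iff_of_lt hab).mp hx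
  have hsplit := ncard_innerArc_split hinj hx'.1 hx'.2
  -- a link enclosing at least half of the remaining inner vertices has a small outer arc
  have hbig : ∀ p q, pos p < pos q → T.IsLink p q →
      (innerArc pos a b).ncard ≤ 2 * (innerArc pos p q).ncard + 1 →
      (innerArc pos a b).ncard ≤ (innerArc pos p q).ncard := by
    intro p q hpq hLpq h
    have := ncard_innerArc_add_ncard_outerArc (pos := pos) (ne_of_apply_ne pos hpq.ne)
    exact hmin (p, q) ⟨hpq, hLpq, show 3 * (outerArc pos p q).ncard ≤ _ by omega⟩
  rcases le_total (innerArc pos a x).ncard (innerArc pos x b).ncard with h | h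
  · have := hbig x b hx'.2 hxb (by omega)
    omega
  · have := hbig a x hx'.1 hax (by omega)
    omega

end PolyTriangulation

/-- If the vertices of `G` lie in convex position (injective `pos`) and the
outer cycle admits a triangulation `T` each of whose diagonals is intertwined
with at most `c` edges of `G`, then `G` has a balanced separation of order at
most `c + 2`: a separation `(A, B)` with `|A ∩ B| ≤ c + 2` and
`|A \ B|, |B \ A| ≤ 2n/3`. -/
theorem balanced_separation_of_triangulation {V : Type*} [Fintype V]
    (G : SimpleGraph V) (pos : V → ℝ) (hinj : Function.Injective pos)
    (hn : 3 ≤ Fintype.card V) (c : ℕ)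
    (T : PolyTriangulation pos)
    (hpierce : ∀ e ∈ T.diags, ∀ a b : V, e = s(a, b) → crossNum G pos a b ≤ c) :
    ∃ A B : Set V,
      A ∪ B = Set.univ ∧
      (∀ a ∈ A \ B, ∀ b ∈ B \ A, ¬ G.Adj a b) ∧
      3 * (A \ B).ncard ≤ 2 * Fintype.card V ∧
      3 * (B \ A).ncard ≤ 2 * Fintype.card V ∧
      (A ∩ B).ncard ≤ c + 2 := by
  obtain ⟨a, b, hab, hL, hin, hout⟩ := T.exists_balanced_link hinj (by omega)
  have hcross : crossNum G pos a b ≤ c := by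
    rcases hL with hcons | hdiag
    · exact (crossNum_eq_zero_of_consecutiveAt G hcons).trans_le c.zero_le
    · exact hpierce _ hdiag a b rfl
  obtain ⟨A, B, hcover, hsep, hA, hB, hAB⟩ := exists_separation_of_crossNum_le G hab hcross
  have := Set.ncard_le_ncard hA
  have := Set.ncard_le_ncard hB
  exact ⟨A, B, hcover, hsep, by omega, by omega, hAB⟩
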